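/- In a connected Nash equilibrium graph of the network creation game with parameter α > 1, for any vertex v, every vertex x at distance at least 3 from v has at most α−1 neighbors among the vertices at distance at least 3 from v. -/

import Mathlib

open scoped ENNReal

section NetworkCreation

variable {V : Type*} [Fintype V] [DecidableEq V]

/-- The undirected network formed by a strategy profile `S`:
`v` and `w` are adjacent iff one of them bought the edge to the other. -/
def netGraph (S : V → Finset V) : SimpleGraph V where
  Adj v w := v ≠ w ∧ (w ∈ S v ∨ v ∈ S w)
  symm := ⟨fun _ _ h => ⟨h.1.symm, h.2.symm⟩⟩
  loopless := ⟨fun _ h => h.1 rfl⟩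

instance (S : V → Finset V) : DecidableRel (netGraph S).Adj :=
  fun v w => inferInstanceAs (Decidable (v ≠ w ∧ (w ∈ S v ∨ v ∈ S w)))

/-- Individual cost of agent `v`: `α` per bought edge, plus the sum of the
graph distances from `v` to all vertices (`⊤` if some vertex is unreachable). -/
noncomputable def netCost (α : ℝ) (S : V → Finset V) (v : V) : ℝ≥0∞ :=
  ENNReal.ofReal α * (S v).card + ∑ w, ((netGraph S).edist v w : ℝ≥0∞)

/-- (Weak) Nash equilibrium: no agent can strictly decrease its own cost by
unilaterally switching its bought-edge set to any other set of other vertices. -/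
def IsNash (α : ℝ) (S : V → Finset V) : Prop :=
  ∀ (v : V) (T : Finset V), v ∉ T →
    netCost α S v ≤ netCost α (Function.update S v T) v

/-- Total social cost of a strategy profile. -/
noncomputable def socialCost (α : ℝ) (S : V → Finset V) : ℝ≥0∞ :=
  ∑ v, netCost α S v

end NetworkCreation

/-!
Let `A` be the set of neighbours of `x` at distance at least `3` from `v`. If `v` additionally
buys the edge `vx`, then `x` moves from distance `≥ 3` to distance `1` from `v`, and every
`y ∈ A` from distance `≥ 3` to distance `≤ 2`; all other distances do not grow. So the deviation
costs `α` and saves at least `#A + 2` in distances, and the equilibrium condition gives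
`#A + 2 ≤ α`. Connectivity makes the distance sums finite, so that they can be cancelled.
-/

open Finset

@[simp, norm_cast]
theorem ENat.toENNReal_sum {ι : Type*} (s : Finset ι) (f : ι → ℕ∞) :
    ((∑ i ∈ s, f i : ℕ∞) : ℝ≥0∞) = ∑ i ∈ s, (f i : ℝ≥0∞) :=
  map_sum ENat.toENNRealRingHom f s

namespace SimpleGraph

variable {V : Type*} {G G' : SimpleGraph V} {v x y : V}

theorem edist_le_two_of_adj_of_adj (hvx : G.Adj v x) (hxy : G.Adj x y) : G.edist v y ≤ 2 :=
  calc G.edist v y ≤ G.edist v x + G.edist x y := SimpleGraph.edist_triangle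
    _ = 2 := by rw [edist_eq_one_iff_adj.mpr hvx, edist_eq_one_iff_adj.mpr hxy]; rfl

theorem sum_edist_add_card_add_two_le [Fintype V] [DecidableEq V] (hle : G ≤ G')
    (hvx : G'.Adj v x) (hx : 3 ≤ G.edist v x) {A : Finset V}
    (hA : ∀ y ∈ A, G.Adj x y ∧ 3 ≤ G.edist v y) :
    ∑ w, G'.edist v w + (#A + 2) ≤ ∑ w, G.edist v w := by
  have hxA : x ∉ A := fun h => (hA x h).1.ne rfl
  have hclose_x : G'.edist v x + 2 ≤ G.edist v x := by
    rw [edist_eq_one_iff_adj.mpr hvx]; exact le_trans (by norm_num) hx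
  have hclose_A : ∀ y ∈ A, G'.edist v y + 1 ≤ G.edist v y := fun y hy =>
    calc G'.edist v y + 1 ≤ 2 + 1 := by
          gcongr; exact edist_le_two_of_adj_of_adj hvx (hle (hA y hy).1)
      _ ≤ G.edist v y := le_trans (by norm_num) (hA y hy).2
  have hclose : ∀ w ∈ (insert x A)ᶜ, G'.edist v w ≤ G.edist v w := fun _ _ => edist_anti hle
  rw [← sum_add_sum_compl (insert x A) (G'.edist v), ← sum_add_sum_compl (insert x A) (G.edist v),
    sum_insert hxA, sum_insert hxA]
  calc G'.edist v x + ∑ y ∈ A, G'.edist v y + ∑ w ∈ (insert x A)ᶜ, G'.edist v w + (#A + 2)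
      = (G'.edist v x + 2) + ∑ y ∈ A, (G'.edist v y + 1) + ∑ w ∈ (insert x A)ᶜ, G'.edist v w := by
        rw [sum_add_distrib, sum_const, nsmul_one]; ring
    _ ≤ _ := add_le_add (add_le_add hclose_x (sum_le_sum hclose_A)) (sum_le_sum hclose)

theorem Connected.sum_edist_ne_top [Fintype V] (hG : G.Connected) (v : V) :
    ∑ w, (G.edist v w : ℝ≥0∞) ≠ ∞ :=
  ENNReal.sum_ne_top.mpr fun w _ =>
    ENat.toENNReal_ne_top.mpr (edist_ne_top_iff_reachable.mpr (hG v w))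

end SimpleGraph

section NetworkCreation

variable {V : Type*} [DecidableEq V] {S T : V → Finset V} {v x : V}

theorem netGraph_mono (h : ∀ u, (S u).erase u ⊆ T u) : netGraph S ≤ netGraph T := by
  rintro a b ⟨hab, hba | hab'⟩
  · exact ⟨hab, .inl (h a (mem_erase.mpr ⟨hab.symm, hba⟩))⟩
  · exact ⟨hab, .inr (h b (mem_erase.mpr ⟨hab, hab'⟩))⟩

/-- Erasing `v` keeps the new strategy admissible (`v ∉ T` in `IsNash`) even if `v ∈ S v`. -/
def buyEdge (S : V → Finset V) (v x : V) : V → Finset V :=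
  Function.update S v (insert x ((S v).erase v))

theorem netGraph_le_netGraph_buyEdge (S : V → Finset V) (v x : V) :
    netGraph S ≤ netGraph (buyEdge S v x) := by
  refine netGraph_mono fun u => ?_
  rcases eq_or_ne u v with rfl | huv
  · simp [buyEdge]
  · simpa [buyEdge, huv] using erase_subset _ _

theorem netGraph_buyEdge_adj (S : V → Finset V) (hvx : v ≠ x) :
    (netGraph (buyEdge S v x)).Adj v x :=
  ⟨hvx, .inl (by simp [buyEdge])⟩

theorem card_buyEdge_le (S : V → Finset V) (v x : V) : #(buyEdge S v x v) ≤ #(S v) + 1 := by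
  simpa [buyEdge] using (card_insert_le _ _).trans (Nat.succ_le_succ card_erase_le)

theorem IsNash.sum_edist_le_sum_edist_buyEdge_add [Fintype V] {α : ℝ} (hN : IsNash α S)
    (hvx : v ≠ x) :
    ∑ w, ((netGraph S).edist v w : ℝ≥0∞)
      ≤ ∑ w, ((netGraph (buyEdge S v x)).edist v w : ℝ≥0∞) + ENNReal.ofReal α := by
  have hdev : netCost α S v ≤ netCost α (buyEdge S v x) v := hN v _ (by simp [hvx])
  have hbought : ENNReal.ofReal α * #(S v) ≠ ∞ := by finiteness
  refine (ENNReal.add_le_add_iff_left hbought).mp ?_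
  calc _ ≤ netCost α (buyEdge S v x) v := hdev
    _ ≤ ENNReal.ofReal α * (#(S v) + 1)
          + ∑ w, ((netGraph (buyEdge S v x)).edist v w : ℝ≥0∞) := by
        unfold netCost; gcongr; exact_mod_cast card_buyEdge_le S v x
    _ = _ := by ring

end NetworkCreation

theorem stmt16_general {V : Type*} [Fintype V] [DecidableEq V] (α : ℝ)
    (S : V → Finset V) (hNash : IsNash α S)
    (hconn : (netGraph S).Connected) (v x : V)
    (hx : 3 ≤ (netGraph S).edist v x) :
    (({y : V | (netGraph S).Adj x y ∧ 3 ≤ (netGraph S).edist v y}.ncard : ℝ))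
      ≤ α - 1 := by
  set G := netGraph S
  set G' := netGraph (buyEdge S v x)
  set A := {y | G.Adj x y ∧ 3 ≤ G.edist v y}.toFinset
  have hvx : v ≠ x := by rintro rfl; simp at hx
  have hsaving : ∑ w, G'.edist v w + (#A + 2) ≤ ∑ w, G.edist v w :=
    SimpleGraph.sum_edist_add_card_add_two_le (netGraph_le_netGraph_buyEdge S v x)
      (netGraph_buyEdge_adj S hvx) hx (by simp [A, G])
  have hG'fin : ∑ w, (G'.edist v w : ℝ≥0∞) ≠ ∞ :=
    (hconn.mono (netGraph_le_netGraph_buyEdge S v x)).sum_edist_ne_top v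
  have hgain : ((#A + 2 : ℕ) : ℝ≥0∞) ≤ ENNReal.ofReal α := by
    refine (ENNReal.add_le_add_iff_left hG'fin).mp ?_
    calc _ ≤ ∑ w, (G.edist v w : ℝ≥0∞) := by exact_mod_cast hsaving
      _ ≤ _ := hNash.sum_edist_le_sum_edist_buyEdge_add hvx
  rw [ENNReal.natCast_le_ofReal (by omega)] at hgain
  rw [Set.ncard_eq_toFinset_card']
  push_cast at hgain
  linarith

/-- In a connected Nash equilibrium with `α > 1`, every vertex `x` at distance at
least 3 from `v` has at most `α - 1` neighbors among the vertices at distance at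
least 3 from `v`. -/
theorem stmt16 {V : Type*} [Fintype V] [DecidableEq V] (α : ℝ) (hα : 1 < α)
    (S : V → Finset V) (hS : ∀ v, v ∉ S v) (hNash : IsNash α S)
    (hconn : (netGraph S).Connected) (v x : V)
    (hx : 3 ≤ (netGraph S).edist v x) :
    (({y : V | (netGraph S).Adj x y ∧ 3 ≤ (netGraph S).edist v y}.ncard : ℝ))
      ≤ α - 1 :=
  stmt16_general α S hNash hconn v x hx
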